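/- arXiv:2602.05287 — 4 statements merged into one kernel-verified Lean document; each statement's English description precedes it below -/
import Mathlib

section
/- Let d ≥ 1 be a natural number, r > 0, and S a finite set of points in Fin d → ℝ with (S.card : ℝ) · (2r)^d < 1. Then there exists a point y in the unit cube Set.Icc (0 : Fin d → ℝ) 1 such that dist(y, s) ≥ r for every s ∈ S, where dist is the sup metric on Fin d → ℝ. -/
open MeasureTheory Metric

theorem exists_forall_le_dist_of_sum_measure_ball_lt {X : Type*} [PseudoMetricSpace X]
    [MeasurableSpace X] (μ : Measure X) {s : Set X} (S : Finset X) (r : ℝ)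
    (h : ∑ x ∈ S, μ (ball x r) < μ s) : ∃ y ∈ s, ∀ x ∈ S, r ≤ dist y x := by
  by_contra! hfar
  have hcover : s ⊆ ⋃ x ∈ S, ball x r := fun y hy ↦ by
    obtain ⟨x, hx, hyx⟩ := hfar y hy
    exact Set.mem_biUnion hx (mem_ball.2 hyx)
  exact (measure_mono hcover |>.trans (measure_biUnion_finset_le S _)).not_gt h

theorem Real.volume_Icc_zero_one_pi {ι : Type*} [Fintype ι] :
    volume (Set.Icc (0 : ι → ℝ) 1) = 1 := by
  simp [Real.volume_Icc_pi]

theorem Real.sum_volume_pi_ball {ι : Type*} [Fintype ι] (S : Finset (ι → ℝ)) {r : ℝ}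
    (hr : 0 < r) :
    ∑ x ∈ S, volume (ball x r) = ENNReal.ofReal (S.card * (2 * r) ^ Fintype.card ι) := by
  simp only [Real.volume_pi_ball _ hr, Finset.sum_const, nsmul_eq_mul]
  rw [ENNReal.ofReal_mul (Nat.cast_nonneg _), ENNReal.ofReal_natCast,
    ENNReal.ofReal_pow (by positivity)]

theorem exists_point_far_from_samples_general
    (d : ℕ) (r : ℝ) (hr : 0 < r)
    (S : Finset (Fin d → ℝ))
    (hcard : (S.card : ℝ) * (2 * r) ^ d < 1) :
    ∃ y ∈ Set.Icc (0 : Fin d → ℝ) 1, ∀ s ∈ S, r ≤ dist y s := by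
  apply exists_forall_le_dist_of_sum_measure_ball_lt volume S r
  rw [Real.sum_volume_pi_ball S hr, Real.volume_Icc_zero_one_pi, Fintype.card_fin]
  exact ENNReal.ofReal_lt_one.2 hcard

/-- Volume argument: too few points cannot `r`-cover the unit cube in the sup
metric, so some point of the cube is at distance at least `r` from every
sample point. -/
theorem exists_point_far_from_samples
    (d : ℕ) (hd : 1 ≤ d) (r : ℝ) (hr : 0 < r)
    (S : Finset (Fin d → ℝ))
    (hcard : (S.card : ℝ) * (2 * r) ^ d < 1) :
    ∃ y ∈ Set.Icc (0 : Fin d → ℝ) 1, ∀ s ∈ S, r ≤ dist y s :=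
  exists_point_far_from_samples_general d r hr S hcard
end

section
/- Let d ≥ 1 be a natural number, r > 0, and S a finite set of points in Fin d → ℝ with (S.card : ℝ) · (2r)^d < 1. Then there exists a function f : (Fin d → ℝ) → ℝ such that f is 1-Lipschitz with respect to the sup metric, f(s) = 0 for every s ∈ S, f is nonnegative, and there exists y in the unit cube Set.Icc (0 : Fin d → ℝ) 1 with f(y) ≥ r. -/
/-! If the closed sup-balls of radius `r` around the samples covered the unit cube, their total
volume `#S * (2r)^d` would be at least `1`. So some point `y` of the cube is at distance more than
`r` from every sample, and the tent `x ↦ max 0 (r - dist x y)` is a 1-Lipschitz function that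
vanishes on the samples and equals `r` at `y`. -/

open MeasureTheory Metric Set

lemma exists_mem_forall_notMem_of_sum_measure_lt {α ι : Type*} [MeasurableSpace α]
    (μ : Measure α) {K : Set α} (S : Finset ι) (U : ι → Set α)
    (h : ∑ i ∈ S, μ (U i) < μ K) : ∃ y ∈ K, ∀ i ∈ S, y ∉ U i := by
  by_contra! hcover
  have hsub : K ⊆ ⋃ i ∈ S, U i := fun y hy => by
    obtain ⟨i, hi, hyi⟩ := hcover y hy
    exact mem_biUnion hi hyi
  exact (measure_mono hsub |>.trans (measure_biUnion_finset_le S U)).not_gt h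

lemma exists_mem_Icc_forall_lt_dist {ι : Type*} [Fintype ι] (S : Finset (ι → ℝ)) {r : ℝ}
    (hr : 0 ≤ r) (hcard : (S.card : ℝ) * (2 * r) ^ Fintype.card ι < 1) :
    ∃ y ∈ Icc (0 : ι → ℝ) 1, ∀ s ∈ S, r < dist y s := by
  have hvol : ∑ s ∈ S, volume (closedBall s r) < volume (Icc (0 : ι → ℝ) 1) := by
    simp only [Real.volume_pi_closedBall _ hr, Finset.sum_const, nsmul_eq_mul,
      Real.volume_Icc_pi, Pi.one_apply, Pi.zero_apply, sub_zero, ENNReal.ofReal_one,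
      Finset.prod_const_one]
    rw [← ENNReal.ofReal_natCast, ← ENNReal.ofReal_mul (Nat.cast_nonneg _)]
    exact ENNReal.ofReal_lt_one.mpr hcard
  obtain ⟨y, hy, hfar⟩ := exists_mem_forall_notMem_of_sum_measure_lt volume S _ hvol
  exact ⟨y, hy, fun s hs => not_le.mp (hfar s hs)⟩

lemma lipschitzWith_one_max_zero_sub_dist {α : Type*} [PseudoMetricSpace α] (r : ℝ) (y : α) :
    LipschitzWith 1 fun x => max 0 (r - dist x y) := by
  simpa using ((LipschitzWith.const r).sub (LipschitzWith.dist_left y)).const_max 0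

theorem exists_lipschitz_bump_vanishing_on_samples_general
    (d : ℕ) (r : ℝ) (hr : 0 < r)
    (S : Finset (Fin d → ℝ))
    (hcard : (S.card : ℝ) * (2 * r) ^ d < 1) :
    ∃ f : (Fin d → ℝ) → ℝ,
      LipschitzWith 1 f ∧ (∀ s ∈ S, f s = 0) ∧ (∀ x, 0 ≤ f x) ∧
      ∃ y ∈ Set.Icc (0 : Fin d → ℝ) 1, r ≤ f y := by
  obtain ⟨y, hy, hfar⟩ :=
    exists_mem_Icc_forall_lt_dist S hr.le (by rwa [Fintype.card_fin])
  refine ⟨fun x => max 0 (r - dist x y), lipschitzWith_one_max_zero_sub_dist r y, ?_,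
    fun _ => le_max_left _ _, y, hy, by simp⟩
  intro s hs
  exact max_eq_left (sub_nonpos.mpr (dist_comm y s ▸ hfar s hs).le)

/-- Indistinguishability lemma: with fewer than `(2r)^(−d)` samples, there is a
nonnegative 1-Lipschitz function (sup metric) vanishing on all samples yet
reaching value at least `r` somewhere on the unit cube. -/
theorem exists_lipschitz_bump_vanishing_on_samples
    (d : ℕ) (hd : 1 ≤ d) (r : ℝ) (hr : 0 < r)
    (S : Finset (Fin d → ℝ))
    (hcard : (S.card : ℝ) * (2 * r) ^ d < 1) :
    ∃ f : (Fin d → ℝ) → ℝ,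
      LipschitzWith 1 f ∧ (∀ s ∈ S, f s = 0) ∧ (∀ x, 0 ≤ f x) ∧
      ∃ y ∈ Set.Icc (0 : Fin d → ℝ) 1, r ≤ f y :=
  exists_lipschitz_bump_vanishing_on_samples_general d r hr S hcard
end

section
/- Let d ≥ 1 be a natural number, r > 0, and S a finite set of points in Fin d → ℝ with (S.card : ℝ) · (2r)^d < 1. Then for every 'estimator' A : (S → ℝ) → ((Fin d → ℝ) → ℝ) (an arbitrary function producing a hypothesis from the sample labels), there exist a 1-Lipschitz function f : (Fin d → ℝ) → ℝ (with respect to the sup metric) and a point y in the unit cube Set.Icc (0 : Fin d → ℝ) 1 such that |A(f restricted to S)(y) − f(y)| ≥ r/2. -/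
open MeasureTheory ENNReal

/-- Sample complexity lower bound: with fewer than `(2r)^(−d)` noiseless
samples, any estimator of a 1-Lipschitz function on the unit cube (sup metric)
incurs worst-case error at least `r/2` at some point of the cube. -/
theorem sample_complexity_lower_bound
    (d : ℕ) (hd : 1 ≤ d) (r : ℝ) (hr : 0 < r)
    (S : Finset (Fin d → ℝ))
    (hcard : (S.card : ℝ) * (2 * r) ^ d < 1)
    (A : ((↥S) → ℝ) → ((Fin d → ℝ) → ℝ)) :
    ∃ f : (Fin d → ℝ) → ℝ, LipschitzWith 1 f ∧
      ∃ y ∈ Set.Icc (0 : Fin d → ℝ) 1,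
        r / 2 ≤ |A (fun s => f s) y - f y| := by
  -- volume argument to find y in the cube far from all sample points
  set U : Set (Fin d → ℝ) := ⋃ s ∈ S, Metric.closedBall s r with hU
  have hball : ∀ s : Fin d → ℝ, volume (Metric.closedBall s r)
      = ENNReal.ofReal (2 * r) ^ d := by
    intro s
    rw [closedBall_pi _ hr.le, volume_pi_pi]
    simp [Real.volume_closedBall]
  have hUvol : volume U ≤ ENNReal.ofReal ((S.card : ℝ) * (2 * r) ^ d) := by
    calc volume U ≤ ∑ s ∈ S, volume (Metric.closedBall s r) :=
          measure_biUnion_finset_le S _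
      _ = (S.card : ℝ≥0∞) * ENNReal.ofReal (2 * r) ^ d := by
          rw [Finset.sum_congr rfl fun s _ => hball s]
          simp [Finset.sum_const, nsmul_eq_mul]
      _ = ENNReal.ofReal ((S.card : ℝ) * (2 * r) ^ d) := by
          rw [eq_comm, ENNReal.ofReal_mul (by positivity), ENNReal.ofReal_pow (by positivity),
            ENNReal.ofReal_natCast]
  have hUlt : volume U < 1 := by
    refine lt_of_le_of_lt hUvol ?_
    rw [show (1 : ℝ≥0∞) = ENNReal.ofReal 1 by simp]
    exact (ENNReal.ofReal_lt_ofReal_iff one_pos).2 hcard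
  have hcube : volume (Set.Icc (0 : Fin d → ℝ) 1) = 1 := by
    rw [← Set.pi_univ_Icc, volume_pi_pi]
    simp [Real.volume_Icc]
  have hnot : ¬ (Set.Icc (0 : Fin d → ℝ) 1 ⊆ U) := by
    intro h
    have := measure_mono (μ := volume) h
    rw [hcube] at this
    exact absurd (lt_of_le_of_lt this hUlt) (lt_irrefl _)
  obtain ⟨y, hy, hyU⟩ := Set.not_subset.1 hnot
  have hfar : ∀ s ∈ S, r < dist y s := by
    intro s hs
    by_contra h
    push_neg at h
    exact hyU (Set.mem_biUnion hs (Metric.mem_closedBall.2 h))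
  -- the bump function
  set f : (Fin d → ℝ) → ℝ := fun x => max (r - dist x y) 0 with hf
  have hflip : LipschitzWith 1 f := by
    have h1 : LipschitzWith 1 (fun x : Fin d → ℝ => r - dist x y) := by
      refine LipschitzWith.of_dist_le_mul fun x z => ?_
      rw [Real.dist_eq, NNReal.coe_one, one_mul]
      have h := abs_dist_sub_le x z y
      rw [show r - dist x y - (r - dist z y) = -(dist x y - dist z y) by ring, abs_neg]
      exact h
    simpa using h1.max_const 0
  have hfS : ∀ s : ↥S, f (s : Fin d → ℝ) = 0 := by
    intro ⟨s, hs⟩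
    have : r - dist s y < 0 := by
      have := hfar s hs
      rw [dist_comm] at this; linarith
    simp [hf, max_eq_right this.le]
  have hfy : f y = r := by simp [hf, hr.le]
  have hsample : (fun s : ↥S => f s) = (fun s : ↥S => (0 : ℝ)) := funext hfS
  set h := A (fun s : ↥S => (0 : ℝ)) with hh
  by_cases hc : r / 2 ≤ |h y - 0|
  · refine ⟨0, ?_, y, hy, ?_⟩
    · exact LipschitzWith.const' (0 : ℝ) (K := 1)
    · simpa using hc
  · refine ⟨f, hflip, y, hy, ?_⟩
    rw [hsample, ← hh, hfy]
    push_neg at hc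
    rw [sub_zero] at hc
    have h2 := abs_lt.1 hc
    rw [abs_of_nonpos (by linarith : h y - r ≤ 0)]
    linarith
end

section
/- Let X and Y be finite nonempty types, S : Finset X a training set, and x₀ : X a point with x₀ ∉ S. Then for every deterministic learning algorithm A : ((↥S) → Y) → Y that predicts the label of x₀ from the restriction of the target function to S, the number of target functions it predicts correctly satisfies: Fintype.card {f : X → Y // A (fun s => f s) = f x₀} · Fintype.card Y = Fintype.card (X → Y). Equivalently, averaged uniformly over all possible target functions f : X → Y, any algorithm's probability of correctly predicting f(x₀) from f restricted to S is exactly 1 / |Y|. -/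
open scoped Classical

open Function

section UpdateInvariant

variable {X Y : Type*} [DecidableEq X]

/-- Since `F` does not see the value at `x₀`, the value that `update` destroys is recovered
as `F g`, which is why the map is invertible. -/
def correctPredictionsProdEquiv (F : (X → Y) → Y) (x₀ : X)
    (hF : ∀ g y, F (update g x₀ y) = F g) :
    {f : X → Y // F f = f x₀} × Y ≃ (X → Y) where
  toFun p := update p.1.1 x₀ p.2
  invFun g := (⟨update g x₀ (F g), by simp [hF]⟩, g x₀)
  left_inv := by
    rintro ⟨⟨f, hf⟩, y⟩
    simp [hF, hf]
  right_inv g := by simp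

theorem card_correctPredictions_mul_card [Fintype X] [Fintype Y] (F : (X → Y) → Y) (x₀ : X)
    (hF : ∀ g y, F (update g x₀ y) = F g) :
    Fintype.card {f : X → Y // F f = f x₀} * Fintype.card Y = Fintype.card (X → Y) := by
  rw [← Fintype.card_prod]
  exact Fintype.card_congr (correctPredictionsProdEquiv F x₀ hF)

end UpdateInvariant

theorem no_free_lunch_general
    {X Y : Type*} [Fintype X] [Fintype Y]
    (S : Finset X) (x₀ : X) (hx₀ : x₀ ∉ S)
    (A : ((↥S) → Y) → Y) :
    Fintype.card {f : X → Y // A (fun s => f s) = f x₀} * Fintype.card Y =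
      Fintype.card (X → Y) := by
  refine card_correctPredictions_mul_card (fun f : X → Y => A fun s => f s) x₀ fun g y => ?_
  have hS : ∀ s : ↥S, (s : X) ≠ x₀ := fun s hs => hx₀ (hs ▸ s.2)
  simp only [update_of_ne (hS _)]

/-- Finite off-training-set No Free Lunch theorem: averaged uniformly over all
target functions `f : X → Y`, any deterministic algorithm predicting `f x₀`
from the restriction of `f` to a training set `S` (with `x₀ ∉ S`) is correct
with probability exactly `1 / |Y|`. -/
theorem no_free_lunch
    {X Y : Type*} [Fintype X] [Fintype Y] [Nonempty X] [Nonempty Y]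
    (S : Finset X) (x₀ : X) (hx₀ : x₀ ∉ S)
    (A : ((↥S) → Y) → Y) :
    Fintype.card {f : X → Y // A (fun s => f s) = f x₀} * Fintype.card Y =
      Fintype.card (X → Y) :=
  no_free_lunch_general S x₀ hx₀ A
end
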